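/- Min-entropy trace bound: let ρ be a d × d positive semidefinite matrix with Tr{ρ} ≤ 1 and ρ ≤ λ·I in the Loewner order for some λ ≥ 0, and let A, B be Hermitian d × d matrices with 0 ≤ A ≤ I and 0 ≤ B ≤ I. Then Tr{ρ A B ρ B A} ≤ λ. -/

import Mathlib

open scoped ComplexOrder

/-!
With `C = A B` and `X = C ρ C* ≥ 0`, the trace is `Tr(X ρ)`. Since `ρ ≤ λ I` and `X ≥ 0`,
`Tr(X ρ) ≤ λ Tr X = λ Tr(ρ C* C)`, and `C* C = B A² B ≤ B² ≤ I` because `0 ≤ A, B ≤ I`;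
hence `Tr(ρ C* C) ≤ Tr ρ ≤ 1`.
-/

open Matrix
open scoped MatrixOrder

section StarOrderedRing

variable {R : Type*} [Ring R] [PartialOrder R] [StarRing R] [StarOrderedRing R]

theorem mul_self_le_self_of_nonneg_of_le_one {a : R} (h₀ : 0 ≤ a) (h₁ : a ≤ 1) : a * a ≤ a := by
  rw [← sub_nonneg] at h₁ ⊢
  have key : a - a * a = a * (1 - a) * a + (1 - a) * a * (1 - a) := by noncomm_ring
  rw [key]
  exact add_nonneg ((IsSelfAdjoint.of_nonneg h₀).conjugate_nonneg h₁)
    ((IsSelfAdjoint.of_nonneg h₁).conjugate_nonneg h₀)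

theorem mul_self_le_one_of_nonneg_of_le_one {a : R} (h₀ : 0 ≤ a) (h₁ : a ≤ 1) : a * a ≤ 1 :=
  (mul_self_le_self_of_nonneg_of_le_one h₀ h₁).trans h₁

theorem star_mul_mul_self_le_one {a b : R} (ha₀ : 0 ≤ a) (ha₁ : a ≤ 1) (hb₀ : 0 ≤ b)
    (hb₁ : b ≤ 1) : star (a * b) * (a * b) ≤ 1 := calc
  star (a * b) * (a * b) = b * (a * a) * b := by
    rw [star_mul, (IsSelfAdjoint.of_nonneg ha₀).star_eq, (IsSelfAdjoint.of_nonneg hb₀).star_eq]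
    noncomm_ring
  _ ≤ b * 1 * b := (IsSelfAdjoint.of_nonneg hb₀).conjugate_le_conjugate
    (mul_self_le_one_of_nonneg_of_le_one ha₀ ha₁)
  _ ≤ 1 := by rw [mul_one]; exact mul_self_le_one_of_nonneg_of_le_one hb₀ hb₁

end StarOrderedRing

namespace Matrix

variable {𝕜 n : Type*} [RCLike 𝕜] [Fintype n]

theorem trace_mul_nonneg {x y : Matrix n n 𝕜} (hx : 0 ≤ x) (hy : 0 ≤ y) :
    0 ≤ (x * y).trace := by
  classical
  obtain ⟨s, rfl⟩ := CStarAlgebra.nonneg_iff_eq_star_mul_self.mp hx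
  rw [mul_assoc, trace_mul_comm]
  exact (star_right_conjugate_nonneg hy s).posSemidef.trace_nonneg

theorem trace_mul_le_trace_mul_of_le {x a b : Matrix n n 𝕜} (hx : 0 ≤ x) (hab : a ≤ b) :
    (x * a).trace ≤ (x * b).trace := by
  rw [← sub_nonneg, ← trace_sub, ← mul_sub]
  exact trace_mul_nonneg hx (sub_nonneg.mpr hab)

end Matrix

theorem min_entropy_trace_bound {d : ℕ}
    (ρ A B : Matrix (Fin d) (Fin d) ℂ) (lam : ℝ) (hlam : 0 ≤ lam)
    (hρ : ρ.PosSemidef) (hρtr : (ρ.trace).re ≤ 1)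
    (hρle : ((lam : ℂ) • (1 : Matrix (Fin d) (Fin d) ℂ) - ρ).PosSemidef)
    (hA : A.PosSemidef) (hAI : (1 - A).PosSemidef)
    (hB : B.PosSemidef) (hBI : (1 - B).PosSemidef) :
    ((ρ * A * B * ρ * B * A).trace).re ≤ lam := by
  have hAB_star : star (A * B) = B * A := by
    rw [star_mul, hA.isHermitian.star_eq, hB.isHermitian.star_eq]
  have hX : 0 ≤ A * B * ρ * star (A * B) := star_right_conjugate_nonneg hρ.nonneg (A * B)
  have hAB_le : star (A * B) * (A * B) ≤ 1 :=
    star_mul_mul_self_le_one hA.nonneg (le_iff.mpr hAI) hB.nonneg (le_iff.mpr hBI)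
  have hρ_one : ρ.trace ≤ 1 :=
    Complex.le_def.mpr ⟨hρtr, (Complex.le_def.mp hρ.trace_nonneg).2.symm⟩
  have hlam' : (0 : ℂ) ≤ lam := by exact_mod_cast hlam
  refine (Complex.re_le_re (?_ : _ ≤ (lam : ℂ))).trans_eq (Complex.ofReal_re lam)
  calc (ρ * A * B * ρ * B * A).trace = (A * B * ρ * star (A * B) * ρ).trace := by
        rw [hAB_star, trace_mul_comm _ ρ]; noncomm_ring
    _ ≤ (A * B * ρ * star (A * B) * ((lam : ℂ) • 1)).trace :=
        trace_mul_le_trace_mul_of_le hX (le_iff.mpr hρle)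
    _ = lam * (ρ * (star (A * B) * (A * B))).trace := by
        rw [mul_smul_comm, mul_one, trace_smul, smul_eq_mul, trace_mul_comm, ← mul_assoc,
          trace_mul_comm]
    _ ≤ lam * (ρ * 1).trace :=
        mul_le_mul_of_nonneg_left (trace_mul_le_trace_mul_of_le hρ.nonneg hAB_le) hlam'
    _ ≤ lam := by rw [mul_one]; exact mul_le_of_le_one_right hlam' hρ_one
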